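/- Let n ∈ ℕ, H₀ > 0, let κ₁, …, κ_{d−1} be real constants, let G be a polynomial on ℝ^{d−1}, and let f, g ∈ 𝔙. For a function u on Π := ℝ^{d−1} × (0,1) define (Lu)(ξ) := Σ_{i=1}^{d−1} κ_i ( ∂_{ξ_d}∂_{ξ_i} u + ∂_{ξ_i}∂_{ξ_d} u ) − (2 G(ξ')/H₀³) ∂²_{ξ_d} u, and set u_f(ξ', ξ_d) := f(ξ') sin(πn ξ_d), u_g(ξ', ξ_d) := g(ξ') sin(πn ξ_d). Then 2 ∫_{ℝ^{d−1}} ∫_0^1 (L u_f)(ξ) · u_g(ξ) dξ_d dξ' = (2π²n²/H₀³) ∫_{ℝ^{d−1}} G(ξ') f(ξ') g(ξ') dξ'. -/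

import Mathlib

open MeasureTheory Real

/-- Partial derivative of `u` in the `i`-th coordinate direction. -/
noncomputable def pd {m : ℕ} (i : Fin m) (u : (Fin m → ℝ) → ℝ) : (Fin m → ℝ) → ℝ :=
  fun x => deriv (fun t => u (Function.update x i t)) (x i)

/-- The Laplacian of `u : ℝ^m → ℝ`. -/
noncomputable def lap {m : ℕ} (u : (Fin m → ℝ) → ℝ) : (Fin m → ℝ) → ℝ :=
  fun x => ∑ i, pd i (pd i u) x

/-- Membership in the space 𝔙 : smooth functions all of whose partial derivatives,
multiplied by any polynomial weight `1 + |ξ|^γ`, are in `L²(ℝ^m)`. -/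
def memV {m : ℕ} (f : (Fin m → ℝ) → ℝ) : Prop :=
  ContDiff ℝ (⊤ : ℕ∞) f ∧ ∀ (τ : List (Fin m)) (γ : ℕ),
    MemLp (fun x => (1 + ‖x‖ ^ γ) * (τ.foldr pd f) x) 2 volume

/-- Partial derivative in the `i`-th horizontal coordinate, for functions on
`ℝ^{d-1} × ℝ`. -/
noncomputable def pd1 {m : ℕ} (i : Fin m) (u : (Fin m → ℝ) × ℝ → ℝ) : (Fin m → ℝ) × ℝ → ℝ :=
  fun x => deriv (fun t => u (Function.update x.1 i t, x.2)) (x.1 i)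

/-- Partial derivative in the last (vertical) coordinate `ξ_d`. -/
noncomputable def pd2 {m : ℕ} (u : (Fin m → ℝ) × ℝ → ℝ) : (Fin m → ℝ) × ℝ → ℝ :=
  fun x => deriv (fun t => u (x.1, t)) x.2

lemma aux_deriv_sin (c t : ℝ) :
    deriv (fun s => Real.sin (c * s)) t = c * Real.cos (c * t) := by
  have h : HasDerivAt (fun s : ℝ => Real.sin (c * s)) (Real.cos (c * t) * (c * 1)) t :=
    (Real.hasDerivAt_sin (c * t)).comp t ((hasDerivAt_id t).const_mul c)
  rw [h.deriv]; ring

lemma aux_deriv_cos (c t : ℝ) :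
    deriv (fun s => Real.cos (c * s)) t = -(c * Real.sin (c * t)) := by
  have h : HasDerivAt (fun s : ℝ => Real.cos (c * s)) (-Real.sin (c * t) * (c * 1)) t :=
    (Real.hasDerivAt_cos (c * t)).comp t ((hasDerivAt_id t).const_mul c)
  rw [h.deriv]; ring

lemma pd1_prod {m : ℕ} (f : (Fin m → ℝ) → ℝ) (h : ℝ → ℝ) (i : Fin m)
    (y : Fin m → ℝ) (s : ℝ) :
    pd1 i (fun ξ => f ξ.1 * h ξ.2) (y, s) = pd i f y * h s := by
  simp only [pd1, pd]
  exact deriv_mul_const_field _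

lemma pd2_prod {m : ℕ} (f : (Fin m → ℝ) → ℝ) (h : ℝ → ℝ)
    (y : Fin m → ℝ) (s : ℝ) :
    pd2 (fun ξ => f ξ.1 * h ξ.2) (y, s) = f y * deriv h s := by
  simp only [pd2]
  exact deriv_const_mul_field _

/-- computation (3.21a) of the paper: for
`L u = ∑ κ_i (∂_d ∂_i u + ∂_i ∂_d u) - (2G(ξ')/H₀³) ∂_d² u` and
`u_f(ξ) = f(ξ')sin(πnξ_d)`, `u_g(ξ) = g(ξ')sin(πnξ_d)`, one has
`2∫∫ (L u_f) u_g = (2π²n²/H₀³) ∫ G f g`. -/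
theorem perturbation_matrix_entry_formula
    (d : ℕ) (hd : 2 ≤ d) (n : ℕ) (hn : 1 ≤ n) (H₀ : ℝ) (hH₀ : 0 < H₀)
    (κ : Fin (d - 1) → ℝ) (G : MvPolynomial (Fin (d - 1)) ℝ)
    (f g : (Fin (d - 1) → ℝ) → ℝ) (hf : memV f) (hg : memV g)
    (L : ((Fin (d - 1) → ℝ) × ℝ → ℝ) → (Fin (d - 1) → ℝ) × ℝ → ℝ)
    (hL : L = fun u ξ => (∑ i, κ i * (pd2 (pd1 i u) ξ + pd1 i (pd2 u) ξ))
      - (2 * MvPolynomial.eval ξ.1 G / H₀ ^ 3) * pd2 (pd2 u) ξ)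
    (uf ug : (Fin (d - 1) → ℝ) × ℝ → ℝ)
    (huf : uf = fun ξ => f ξ.1 * Real.sin (π * n * ξ.2))
    (hug : ug = fun ξ => g ξ.1 * Real.sin (π * n * ξ.2)) :
    2 * ∫ y : Fin (d - 1) → ℝ, ∫ t in (0:ℝ)..1, L uf (y, t) * ug (y, t)
      = (2 * π ^ 2 * n ^ 2 / H₀ ^ 3) * ∫ y, MvPolynomial.eval y G * f y * g y := by
  have hn0 : (0:ℝ) < (n:ℝ) := by exact_mod_cast hn
  simp only [hL, huf, hug]
  set c : ℝ := π * (n:ℝ) with hc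
  have hc0 : c ≠ 0 := by positivity
  have hsc : Real.sin c = 0 := by rw [hc, mul_comm]; exact Real.sin_nat_mul_pi n
  set F : (Fin (d - 1) → ℝ) × ℝ → ℝ := fun ξ => f ξ.1 * Real.sin (c * ξ.2) with hF
  -- derivative computations
  have e1 : ∀ i : Fin (d - 1),
      pd1 i F = fun ξ => pd i f ξ.1 * Real.sin (c * ξ.2) :=
    fun i => funext fun ξ => pd1_prod f (fun s => Real.sin (c * s)) i ξ.1 ξ.2
  have e2 : pd2 F = fun ξ => f ξ.1 * (c * Real.cos (c * ξ.2)) := by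
    funext ξ
    have h := pd2_prod f (fun s => Real.sin (c * s)) ξ.1 ξ.2
    rw [aux_deriv_sin] at h
    exact h
  have E1 : ∀ (i : Fin (d - 1)) (y : Fin (d - 1) → ℝ) (t : ℝ),
      pd2 (pd1 i F) (y, t) = pd i f y * (c * Real.cos (c * t)) := by
    intro i y t
    rw [e1 i]
    have h := pd2_prod (pd i f) (fun s => Real.sin (c * s)) y t
    rw [aux_deriv_sin] at h
    exact h
  have E2 : ∀ (i : Fin (d - 1)) (y : Fin (d - 1) → ℝ) (t : ℝ),
      pd1 i (pd2 F) (y, t) = pd i f y * (c * Real.cos (c * t)) := by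
    intro i y t
    rw [e2]
    exact pd1_prod f (fun s => c * Real.cos (c * s)) i y t
  have E3 : ∀ (y : Fin (d - 1) → ℝ) (t : ℝ),
      pd2 (pd2 F) (y, t) = f y * -(c * (c * Real.sin (c * t))) := by
    intro y t
    rw [e2]
    have h := pd2_prod f (fun s => c * Real.cos (c * s)) y t
    rw [deriv_const_mul_field, aux_deriv_cos] at h
    rw [h]; ring
  -- the elementary trigonometric integrals
  have I1 : (∫ t in (0:ℝ)..1, Real.sin (c * t) * Real.cos (c * t)) = 0 := by
    have h := intervalIntegral.integral_comp_mul_left (a := 0) (b := 1)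
      (fun x => Real.sin x * Real.cos x) hc0
    simp only [mul_zero, mul_one] at h
    rw [h, integral_sin_mul_cos₁, hsc]
    simp
  have I2 : (∫ t in (0:ℝ)..1, Real.sin (c * t) ^ 2) = 1 / 2 := by
    have h := intervalIntegral.integral_comp_mul_left (a := 0) (b := 1)
      (fun x => Real.sin x ^ 2) hc0
    simp only [mul_zero, mul_one] at h
    rw [h, integral_sin_sq, hsc]
    simp only [Real.sin_zero, Real.cos_zero, zero_mul, mul_zero, sub_zero, zero_sub, zero_add,
      smul_eq_mul]
    field_simp
  -- the inner integral
  have key : ∀ y : Fin (d - 1) → ℝ,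
      (∫ t in (0:ℝ)..1,
        ((∑ i, κ i * (pd2 (pd1 i F) (y, t) + pd1 i (pd2 F) (y, t)))
          - 2 * MvPolynomial.eval y G / H₀ ^ 3 * pd2 (pd2 F) (y, t))
          * (g y * Real.sin (c * t)))
      = π ^ 2 * (n : ℝ) ^ 2 / H₀ ^ 3 * (MvPolynomial.eval y G * f y * g y) := by
    intro y
    rw [intervalIntegral.integral_congr
      (g := fun t => ((∑ i, κ i * (2 * (pd i f y * c))) * g y)
          * (Real.sin (c * t) * Real.cos (c * t))
        + (2 * MvPolynomial.eval y G / H₀ ^ 3 * c ^ 2 * (f y * g y)) * Real.sin (c * t) ^ 2)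
      (fun t _ => by
        simp only [E1, E2, E3]
        rw [show (∑ i, κ i * (pd i f y * (c * Real.cos (c * t))
            + pd i f y * (c * Real.cos (c * t))))
          = (∑ i, κ i * (2 * (pd i f y * c))) * Real.cos (c * t) from by
            rw [Finset.sum_mul]; exact Finset.sum_congr rfl fun i _ => by ring]
        ring)]
    rw [intervalIntegral.integral_add
      ((Continuous.intervalIntegrable (by fun_prop) 0 1))
      ((Continuous.intervalIntegrable (by fun_prop) 0 1)),
      intervalIntegral.integral_const_mul, intervalIntegral.integral_const_mul, I1, I2]
    rw [hc]
    ring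
  simp only [key]
  rw [MeasureTheory.integral_const_mul]
  ring
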